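/- A graph G is the square of a connected hereditary clique-Helly split graph if and only if G is a hereditary clique-Helly graph satisfying |⋂𝒞(G)| ≥ |𝒞(G)|. -/

import Mathlib

open SimpleGraph

/-- The square of a graph: join distinct vertices at distance at most 2. -/
def Gsq {V : Type} (H : SimpleGraph V) : SimpleGraph V where
  Adj u v := u ≠ v ∧ (H.Adj u v ∨ ∃ w, H.Adj u w ∧ H.Adj w v)
  symm := by
    constructor
    rintro u v ⟨h1, h2⟩
    refine ⟨h1.symm, ?_⟩
    rcases h2 with h | ⟨w, hw1, hw2⟩
    · exact Or.inl h.symm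
    · exact Or.inr ⟨w, hw2.symm, hw1.symm⟩
  loopless := ⟨fun v h => h.1 rfl⟩

/-- `C`, `I` form a split partition of `H`: `C` a clique, `I` independent. -/
def IsSplitPart {V : Type} (H : SimpleGraph V) (C I : Set V) : Prop :=
  C ∪ I = Set.univ ∧ Disjoint C I ∧ H.IsClique C ∧ ∀ a ∈ I, ∀ b ∈ I, ¬ H.Adj a b

/-- `H` is a split graph. -/
def IsSplit {V : Type} (H : SimpleGraph V) : Prop := ∃ C I, IsSplitPart H C I

/-- The set of inclusion-maximal cliques of `G`. -/
def maxCliques {V : Type} (G : SimpleGraph V) : Set (Set V) :=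
  {Q | G.IsClique Q ∧ ∀ R, G.IsClique R → Q ⊆ R → Q = R}

/-- The intersection of all maximal cliques of `G`. -/
def core {V : Type} (G : SimpleGraph V) : Set V := ⋂₀ maxCliques G

/-- The condition `|⋂𝒞(G)| ≥ |𝒞(G)|`. -/
def cliqueIneq {V : Type} (G : SimpleGraph V) : Prop :=
  (maxCliques G).ncard ≤ (core G).ncard

/-- `G` contains an induced copy of `F`. -/
def InducedCopy {α V : Type} (F : SimpleGraph α) (G : SimpleGraph V) : Prop :=
  ∃ f : α ↪ V, ∀ a b, F.Adj a b ↔ G.Adj (f a) (f b)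

/-- The `ℓ`-sun: independent set `inl i`, clique `inr i`, with `inl i` adjacent
to exactly `inr i` and `inr (i+1)` (mod ℓ). -/
def sunGraph (ℓ : ℕ) : SimpleGraph (Fin ℓ ⊕ Fin ℓ) :=
  SimpleGraph.fromRel (fun a b =>
    match a, b with
    | .inr _, .inr _ => True
    | .inl i, .inr j => j.val = i.val ∨ j.val = (i.val + 1) % ℓ
    | _, _ => False)

/-- `H` contains no induced 3-sun. -/
def Sun3Free {V : Type} (H : SimpleGraph V) : Prop := ¬ InducedCopy (sunGraph 3) H

/-- `H` contains no induced odd sun. -/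
def OddSunFree {V : Type} (H : SimpleGraph V) : Prop :=
  ∀ ℓ, 3 ≤ ℓ → Odd ℓ → ¬ InducedCopy (sunGraph ℓ) H

/-- The cycle on `n` vertices. -/
def cycleG (n : ℕ) : SimpleGraph (Fin n) :=
  SimpleGraph.fromRel (fun i j => j.val = (i.val + 1) % n)

/-- `G` is chordal: no induced cycle of length at least 4. -/
def Chordal {V : Type} (G : SimpleGraph V) : Prop :=
  ∀ n, 4 ≤ n → ¬ InducedCopy (cycleG n) G

/-- `G` is strongly chordal: chordal and `ℓ`-sun-free for all `ℓ ≥ 3`. -/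
def StronglyChordal {V : Type} (G : SimpleGraph V) : Prop :=
  Chordal G ∧ ∀ ℓ, 3 ≤ ℓ → ¬ InducedCopy (sunGraph ℓ) G

/-- The trunk `T(G)`: a split graph whose clique is `𝒞(G)` and whose
independent set is `V(G) \ ⋂𝒞(G)`, with `v` adjacent to `Q` iff `v ∈ Q`. -/
def trunk {V : Type} (G : SimpleGraph V) :
    SimpleGraph (↥(maxCliques G) ⊕ ↥{v : V | v ∉ core G}) :=
  SimpleGraph.fromRel (fun a b =>
    match a, b with
    | .inl _, .inl _ => True
    | .inl Q, .inr v => (v : V) ∈ (Q : Set V)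
    | _, _ => False)

/-- The join of two graphs. -/
def joinG {α β : Type} (G : SimpleGraph α) (H : SimpleGraph β) : SimpleGraph (α ⊕ β) :=
  SimpleGraph.fromRel (fun a b =>
    match a, b with
    | .inl x, .inl y => G.Adj x y
    | .inr x, .inr y => H.Adj x y
    | .inl _, .inr _ => True
    | _, _ => False)

/-- The vertex-to-maximal-clique incidence bipartite graph of `G`. -/
def incidence {V : Type} (G : SimpleGraph V) : SimpleGraph (V ⊕ ↥(maxCliques G)) :=
  SimpleGraph.fromRel (fun a b =>
    match a, b with
    | .inl v, .inr Q => v ∈ (Q : Set V)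
    | _, _ => False)

/-- `G` is balanced: its vertex-to-maximal-clique incidence graph has no induced
cycle of length `2k` for odd `k ≥ 3`. -/
def BalancedGraph {V : Type} (G : SimpleGraph V) : Prop :=
  ∀ k, 3 ≤ k → Odd k → ¬ InducedCopy (cycleG (2 * k)) (incidence G)

/-- `G` is clique-Helly: every nonempty pairwise intersecting family of maximal
cliques has a common vertex. -/
def CliqueHelly {V : Type} (G : SimpleGraph V) : Prop :=
  ∀ S ⊆ maxCliques G, S.Nonempty →
    (∀ Q ∈ S, ∀ R ∈ S, (Q ∩ R).Nonempty) → (⋂₀ S).Nonempty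

/-- `G` is hereditary clique-Helly. -/
def HCH {V : Type} (G : SimpleGraph V) : Prop :=
  ∀ S : Set V, CliqueHelly (G.induce S)

/-- Adding an apex vertex adjacent exactly to the vertices of `C`. -/
def addApex {V : Type} (H : SimpleGraph V) (C : Set V) : SimpleGraph (Option V) :=
  SimpleGraph.fromRel (fun a b =>
    match a, b with
    | some x, some y => H.Adj x y
    | none, some y => y ∈ C
    | _, _ => False)

/-- A class of graphs is hereditary if it is closed under induced subgraphs
(up to isomorphism). -/
def Hereditary (𝒢 : ∀ α : Type, SimpleGraph α → Prop) : Prop :=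
  ∀ (α β : Type) (F : SimpleGraph α) (G : SimpleGraph β),
    𝒢 β G → InducedCopy F G → 𝒢 α F

/-- A class `𝒢` is simple: every `H ∈ 𝒢` can be mapped to some `H' ∈ 𝒢` with
`H'² ≅ H² ⊕ K₁`. -/
def SimpleClass (𝒢 : ∀ α : Type, SimpleGraph α → Prop) : Prop :=
  ∀ (α : Type) (H : SimpleGraph α), 𝒢 α H →
    ∃ (β : Type) (H' : SimpleGraph β), 𝒢 β H' ∧
      Nonempty (Gsq H' ≃g joinG (Gsq H) (⊤ : SimpleGraph (Fin 1)))

/-- The Hajós-type graphs `G₁,…,G₄` (`hajos 0 = G₁`, …, `hajos 3 = G₄`): the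
3-sun with `k` additional edges among its degree-2 vertices. -/
def hajos (k : ℕ) : SimpleGraph (Fin 3 ⊕ Fin 3) :=
  SimpleGraph.fromRel (fun a b =>
    match a, b with
    | .inr _, .inr _ => True
    | .inl i, .inr j => j.val = i.val ∨ j.val = (i.val + 1) % 3
    | .inl i, .inl j => (i.val = 0 ∧ j.val = 1 ∧ 1 ≤ k) ∨
        (i.val = 1 ∧ j.val = 2 ∧ 2 ≤ k) ∨ (i.val = 0 ∧ j.val = 2 ∧ 3 ≤ k)
    | _, _ => False)
section Aux

variable {V : Type} {G : SimpleGraph V}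

lemma exists_max_clique [Finite V] (G : SimpleGraph V) {s : Set V} (hs : G.IsClique s) :
    ∃ Q ∈ maxCliques G, s ⊆ Q := by
  have hfin : {R : Set V | G.IsClique R ∧ s ⊆ R}.Finite := Set.toFinite _
  obtain ⟨Q, hQ, hmax⟩ := Set.Finite.exists_maximal hfin ⟨s, hs, subset_rfl⟩
  refine ⟨Q, ⟨hQ.1, fun R hR hQR => ?_⟩, hQ.2⟩
  exact hQR.antisymm (hmax ⟨hR, hQ.2.trans hQR⟩ hQR)

lemma mem_max_clique [Finite V] (G : SimpleGraph V) (v : V) :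
    ∃ Q ∈ maxCliques G, v ∈ Q := by
  obtain ⟨Q, hQ, hsub⟩ := exists_max_clique G (G.isClique_singleton v)
  exact ⟨Q, hQ, hsub rfl⟩

lemma adj_of_mem_clique {Q : Set V} (hQ : G.IsClique Q) {u v : V}
    (hu : u ∈ Q) (hv : v ∈ Q) (h : u ≠ v) : G.Adj u v := hQ hu hv h

lemma adj_common_clique [Finite V] {u v : V} (h : G.Adj u v) :
    ∃ Q ∈ maxCliques G, u ∈ Q ∧ v ∈ Q := by
  have hcl : G.IsClique {u, v} := by
    rw [SimpleGraph.isClique_pair]; exact fun _ => h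
  obtain ⟨Q, hQ, hsub⟩ := exists_max_clique G hcl
  exact ⟨Q, hQ, hsub (by simp), hsub (by simp)⟩

lemma core_subset_max {Q : Set V} (hQ : Q ∈ maxCliques G) : core G ⊆ Q :=
  fun _ hx => hx Q hQ

/-- From a maximal clique not containing `u`, extract a non-neighbour of `u`. -/
lemma exists_nonadj {M : Set V} (hM : M ∈ maxCliques G) {u : V} (hu : u ∉ M) :
    ∃ a ∈ M, a ≠ u ∧ ¬ G.Adj a u := by
  by_contra hcon
  push_neg at hcon
  have hcl : G.IsClique (insert u M) := by
    intro x hx y hy hxy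
    rcases hx with rfl | hx
    · rcases hy with rfl | hy
      · exact absurd rfl hxy
      · rcases eq_or_ne y x with rfl | hne
        · exact absurd rfl hxy
        · exact ((hcon y hy hne).symm)
    · rcases hy with rfl | hy
      · exact hcon x hx hxy
      · exact hM.1 hx hy hxy
  have := hM.2 _ hcl (Set.subset_insert _ _)
  exact hu (this ▸ Set.mem_insert u M)

/-- The Hajós pattern is forbidden in hereditary clique-Helly graphs. -/
lemma hajos_pattern (G : SimpleGraph V) (v1 v2 v3 a b c : V)
    (h12 : G.Adj v1 v2) (h13 : G.Adj v1 v3) (h23 : G.Adj v2 v3)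
    (ha2 : G.Adj a v2) (ha3 : G.Adj a v3) (ha1 : ¬ G.Adj a v1) (hane : a ≠ v1)
    (hb1 : G.Adj b v1) (hb3 : G.Adj b v3) (hb2 : ¬ G.Adj b v2) (hbne : b ≠ v2)
    (hc1 : G.Adj c v1) (hc2 : G.Adj c v2) (hc3 : ¬ G.Adj c v3) (hcne : c ≠ v3) :
    ¬ HCH G := by
  intro hHCH
  -- distinctness
  have n12 : v1 ≠ v2 := h12.ne
  have n13 : v1 ≠ v3 := h13.ne
  have n23 : v2 ≠ v3 := h23.ne
  have nav2 : a ≠ v2 := ha2.ne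
  have nav3 : a ≠ v3 := ha3.ne
  have nbv1 : b ≠ v1 := hb1.ne
  have nbv3 : b ≠ v3 := hb3.ne
  have ncv1 : c ≠ v1 := hc1.ne
  have ncv2 : c ≠ v2 := hc2.ne
  have nab : a ≠ b := fun h => ha1 (h ▸ hb1)
  have nac : a ≠ c := fun h => ha1 (h ▸ hc1)
  have nbc : b ≠ c := fun h => hb2 (h ▸ hc2)
  set S6 : Set V := {v1, v2, v3, a, b, c} with hS6
  have mv1 : v1 ∈ S6 := by simp [hS6]
  have mv2 : v2 ∈ S6 := by simp [hS6]
  have mv3 : v3 ∈ S6 := by simp [hS6]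
  have ma : a ∈ S6 := by simp [hS6]
  have mb : b ∈ S6 := by simp [hS6]
  have mc : c ∈ S6 := by simp [hS6]
  set A1 : Set ↥S6 := {x | (x : V) = a ∨ (x : V) = v2 ∨ (x : V) = v3} with hA1
  set A2 : Set ↥S6 := {x | (x : V) = b ∨ (x : V) = v1 ∨ (x : V) = v3} with hA2
  set A3 : Set ↥S6 := {x | (x : V) = c ∨ (x : V) = v1 ∨ (x : V) = v2} with hA3
  have adj_iff : ∀ x y : ↥S6, (G.induce S6).Adj x y ↔ G.Adj (x : V) (y : V) :=
    fun x y => Iff.rfl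
  -- a helper to prove the three sets are maximal cliques
  have key : ∀ (p q r s t u : V), p ∈ S6 → q ∈ S6 → r ∈ S6 → s ∈ S6 → t ∈ S6 → u ∈ S6 →
      G.Adj p q → G.Adj p r → G.Adj q r →
      (¬ G.Adj s p) → s ≠ p → (¬ G.Adj t q) → t ≠ q → (¬ G.Adj u r) → u ≠ r →
      ({v1,v2,v3,a,b,c} : Set V) ⊆ {p, q, r, s, t, u} →
      {x : ↥S6 | (x : V) = p ∨ (x : V) = q ∨ (x : V) = r} ∈ maxCliques (G.induce S6) := by
    intro p q r s t u hp hq hr hs ht hu hpq hpr hqr hsp hsp' htq htq' hur hur' hcover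
    constructor
    · intro x hx y hy hxy
      rw [adj_iff]
      have hxy' : (x : V) ≠ (y : V) := fun h => hxy (Subtype.ext h)
      rcases hx with hx | hx | hx <;> rcases hy with hy | hy | hy <;>
        rw [hx, hy] <;> rw [hx, hy] at hxy' <;>
        first
          | exact absurd rfl hxy'
          | assumption
          | exact hpq.symm
          | exact hpr.symm
          | exact hqr.symm
    · intro R hR hsub
      refine Set.Subset.antisymm hsub fun x hx => ?_
      have hxS : (x : V) ∈ ({p, q, r, s, t, u} : Set V) := hcover (by exact x.2)
      simp only [Set.mem_insert_iff, Set.mem_singleton_iff] at hxS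
      have hmemP : (⟨p, hp⟩ : ↥S6) ∈ R := hsub (Or.inl rfl)
      have hmemQ : (⟨q, hq⟩ : ↥S6) ∈ R := hsub (Or.inr (Or.inl rfl))
      have hmemR : (⟨r, hr⟩ : ↥S6) ∈ R := hsub (Or.inr (Or.inr rfl))
      rcases hxS with h | h | h | h | h | h
      · exact Or.inl h
      · exact Or.inr (Or.inl h)
      · exact Or.inr (Or.inr h)
      · exfalso
        have hne : x ≠ ⟨p, hp⟩ := fun he => hsp' (by rw [← h, he])
        have := hR hx hmemP hne
        rw [adj_iff] at this
        rw [h] at this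
        exact hsp this
      · exfalso
        have hne : x ≠ ⟨q, hq⟩ := fun he => htq' (by rw [← h, he])
        have := hR hx hmemQ hne
        rw [adj_iff] at this
        rw [h] at this
        exact htq this
      · exfalso
        have hne : x ≠ ⟨r, hr⟩ := fun he => hur' (by rw [← h, he])
        have := hR hx hmemR hne
        rw [adj_iff] at this
        rw [h] at this
        exact hur this
  have hA1m : A1 ∈ maxCliques (G.induce S6) := by
    refine key a v2 v3 v1 b c ma mv2 mv3 mv1 mb mc ha2 ha3 h23
      (fun h => ha1 h.symm) (Ne.symm hane) hb2 hbne hc3 hcne ?_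
    · intro z hz; simp only [Set.mem_insert_iff, Set.mem_singleton_iff] at hz ⊢; tauto
  have hA2m : A2 ∈ maxCliques (G.induce S6) := by
    refine key b v1 v3 v2 a c mb mv1 mv3 mv2 ma mc hb1 hb3 h13
      (fun h => hb2 h.symm) (Ne.symm hbne) ha1 hane hc3 hcne ?_
    · intro z hz; simp only [Set.mem_insert_iff, Set.mem_singleton_iff] at hz ⊢; tauto
  have hA3m : A3 ∈ maxCliques (G.induce S6) := by
    refine key c v1 v2 v3 a b mc mv1 mv2 mv3 ma mb hc1 hc2 h12
      (fun h => hc3 h.symm) (Ne.symm hcne) ha1 hane hb2 hbne ?_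
    · intro z hz; simp only [Set.mem_insert_iff, Set.mem_singleton_iff] at hz ⊢; tauto
  have hsubfam : ({A1, A2, A3} : Set (Set ↥S6)) ⊆ maxCliques (G.induce S6) := by
    intro X hX
    simp only [Set.mem_insert_iff, Set.mem_singleton_iff] at hX
    rcases hX with rfl | rfl | rfl
    exacts [hA1m, hA2m, hA3m]
  have hpairwise : ∀ Q ∈ ({A1, A2, A3} : Set (Set ↥S6)), ∀ R ∈ ({A1, A2, A3} : Set (Set ↥S6)),
      (Q ∩ R).Nonempty := by
    intro Q hQ R hR
    simp only [Set.mem_insert_iff, Set.mem_singleton_iff] at hQ hR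
    rcases hQ with rfl | rfl | rfl <;> rcases hR with rfl | rfl | rfl
    · exact ⟨⟨a, ma⟩, Or.inl rfl, Or.inl rfl⟩
    · exact ⟨⟨v3, mv3⟩, Or.inr (Or.inr rfl), Or.inr (Or.inr rfl)⟩
    · exact ⟨⟨v2, mv2⟩, Or.inr (Or.inl rfl), Or.inr (Or.inr rfl)⟩
    · exact ⟨⟨v3, mv3⟩, Or.inr (Or.inr rfl), Or.inr (Or.inr rfl)⟩
    · exact ⟨⟨b, mb⟩, Or.inl rfl, Or.inl rfl⟩
    · exact ⟨⟨v1, mv1⟩, Or.inr (Or.inl rfl), Or.inr (Or.inl rfl)⟩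
    · exact ⟨⟨v2, mv2⟩, Or.inr (Or.inr rfl), Or.inr (Or.inl rfl)⟩
    · exact ⟨⟨v1, mv1⟩, Or.inr (Or.inl rfl), Or.inr (Or.inl rfl)⟩
    · exact ⟨⟨c, mc⟩, Or.inl rfl, Or.inl rfl⟩
  obtain ⟨z, hz⟩ := hHCH S6 {A1, A2, A3} hsubfam ⟨A1, by simp⟩ hpairwise
  have hz1 : z ∈ A1 := hz A1 (by simp)
  have hz2 : z ∈ A2 := hz A2 (by simp)
  have hz3 : z ∈ A3 := hz A3 (by simp)
  rw [hA1] at hz1; rw [hA2] at hz2; rw [hA3] at hz3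
  simp only [Set.mem_setOf_eq] at hz1 hz2 hz3
  rcases hz1 with h | h | h <;> rcases hz2 with h' | h' | h' <;>
    rcases hz3 with h'' | h'' | h'' <;>
    (first | exact n12 (h.symm.trans h') | exact n13 (h.symm.trans h') | exact n23 (h.symm.trans h') | exact nav2 (h.symm.trans h') | exact nav3 (h.symm.trans h') | exact nbv1 (h.symm.trans h') | exact nbv3 (h.symm.trans h') | exact ncv1 (h.symm.trans h') | exact ncv2 (h.symm.trans h') | exact nab (h.symm.trans h') | exact nac (h.symm.trans h') | exact nbc (h.symm.trans h') | exact hane (h.symm.trans h') | exact hbne (h.symm.trans h') | exact hcne (h.symm.trans h') | exact n12 (h'.symm.trans h) | exact n13 (h'.symm.trans h) | exact n23 (h'.symm.trans h) | exact nav2 (h'.symm.trans h) | exact nav3 (h'.symm.trans h) | exact nbv1 (h'.symm.trans h) | exact nbv3 (h'.symm.trans h) | exact ncv1 (h'.symm.trans h) | exact ncv2 (h'.symm.trans h) | exact nab (h'.symm.trans h) | exact nac (h'.symm.trans h) | exact nbc (h'.symm.trans h) | exact hane (h'.symm.trans h) | exact hbne (h'.symm.trans h) | exact hcne (h'.symm.trans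 h) | exact n12 (h.symm.trans h'') | exact n13 (h.symm.trans h'') | exact n23 (h.symm.trans h'') | exact nav2 (h.symm.trans h'') | exact nav3 (h.symm.trans h'') | exact nbv1 (h.symm.trans h'') | exact nbv3 (h.symm.trans h'') | exact ncv1 (h.symm.trans h'') | exact ncv2 (h.symm.trans h'') | exact nab (h.symm.trans h'') | exact nac (h.symm.trans h'') | exact nbc (h.symm.trans h'') | exact hane (h.symm.trans h'') | exact hbne (h.symm.trans h'') | exact hcne (h.symm.trans h'') | exact n12 (h''.symm.trans h) | exact n13 (h''.symm.trans h) | exact n23 (h''.symm.trans h) | exact nav2 (h''.symm.trans h) | exact nav3 (h''.symm.trans h) | exact nbv1 (h''.symm.trans h) | exact nbv3 (h''.symm.trans h) | exact ncv1 (h''.symm.trans h) | exact ncv2 (h''.symm.trans h) | exact nab (h''.symm.trans h) | exact nac (h''.symm.trans h) | exact nbc (h''.symm.trans h) | exact hane (h''.symm.trans h) | exact hbne (h''.symm.trans h) | exact hcne (h''.symm.trans h) | exact n12 (h'.symm.trans h'') | exact n13 (h'.symm.trans h'') | exact n23 (h'.symm.trans h'') | exact nav2 (h'.symm.trans h'')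 | exact nav3 (h'.symm.trans h'') | exact nbv1 (h'.symm.trans h'') | exact nbv3 (h'.symm.trans h'') | exact ncv1 (h'.symm.trans h'') | exact ncv2 (h'.symm.trans h'') | exact nab (h'.symm.trans h'') | exact nac (h'.symm.trans h'') | exact nbc (h'.symm.trans h'') | exact hane (h'.symm.trans h'') | exact hbne (h'.symm.trans h'') | exact hcne (h'.symm.trans h'') | exact n12 (h''.symm.trans h') | exact n13 (h''.symm.trans h') | exact n23 (h''.symm.trans h') | exact nav2 (h''.symm.trans h') | exact nav3 (h''.symm.trans h') | exact nbv1 (h''.symm.trans h') | exact nbv3 (h''.symm.trans h') | exact ncv1 (h''.symm.trans h') | exact ncv2 (h''.symm.trans h') | exact nab (h''.symm.trans h') | exact nac (h''.symm.trans h') | exact nbc (h''.symm.trans h') | exact hane (h''.symm.trans h') | exact hbne (h''.symm.trans h') | exact hcne (h''.symm.trans h'))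

/-- Transfer: a hereditary clique-Helly graph is itself clique-Helly. -/
lemma cliqueHelly_of_HCH (G : SimpleGraph V) (h : HCH G) {F : Set (Set V)}
    (hsub : F ⊆ maxCliques G) (hne : F.Nonempty)
    (hpw : ∀ Q ∈ F, ∀ R ∈ F, (Q ∩ R).Nonempty) : (⋂₀ F).Nonempty := by
  classical
  let lift : Set V → Set ↥(Set.univ : Set V) := fun M => Subtype.val ⁻¹' M
  have hmax : ∀ M ∈ maxCliques G, lift M ∈ maxCliques (G.induce Set.univ) := by
    intro M hM
    constructor
    · intro x hx y hy hxy
      exact hM.1 hx hy (fun hc => hxy (Subtype.ext hc))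
    · intro R hR hsubR
      have him : G.IsClique (Subtype.val '' R) := by
        rintro x ⟨x', hx', rfl⟩ y ⟨y', hy', rfl⟩ hxy
        exact hR hx' hy' (fun hc => hxy (congrArg Subtype.val hc))
      have hMsub : M ⊆ Subtype.val '' R := fun m hm => ⟨⟨m, trivial⟩, hsubR hm, rfl⟩
      have heq : M = Subtype.val '' R := hM.2 _ him hMsub
      ext x
      constructor
      · intro hx; exact hsubR hx
      · intro hx
        show (x : V) ∈ M
        rw [heq]
        exact ⟨x, hx, rfl⟩
  obtain ⟨z, hz⟩ := h Set.univ (lift '' F)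
    (by rintro Q' ⟨Q, hQ, rfl⟩; exact hmax Q (hsub hQ))
    (hne.image _)
    (by
      rintro Q' ⟨Q, hQ, rfl⟩ R' ⟨R, hR, rfl⟩
      obtain ⟨x, hx1, hx2⟩ := hpw Q hQ R hR
      exact ⟨⟨x, trivial⟩, hx1, hx2⟩)
  exact ⟨(z : V), fun M hM => hz (lift M) ⟨M, hM, rfl⟩⟩

/-- A graph with no Hajós pattern is hereditary clique-Helly. -/
lemma hch_of_no_pattern [Finite V] (G : SimpleGraph V)
    (hnp : ∀ v1 v2 v3 a b c : V, G.Adj v1 v2 → G.Adj v1 v3 → G.Adj v2 v3 →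
      G.Adj a v2 → G.Adj a v3 → ¬ G.Adj a v1 → a ≠ v1 →
      G.Adj b v1 → G.Adj b v3 → ¬ G.Adj b v2 → b ≠ v2 →
      G.Adj c v1 → G.Adj c v2 → ¬ G.Adj c v3 → c ≠ v3 → False) : HCH G := by
  intro S
  suffices h : ∀ n (𝒮 : Set (Set ↥S)), 𝒮.ncard ≤ n → 𝒮 ⊆ maxCliques (G.induce S) →
      𝒮.Nonempty → (∀ Q ∈ 𝒮, ∀ R ∈ 𝒮, (Q ∩ R).Nonempty) → (⋂₀ 𝒮).Nonempty by
    intro 𝒮 hsub hne hpw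
    exact h _ 𝒮 le_rfl hsub hne hpw
  intro n
  induction n with
  | zero =>
    intro 𝒮 hc hsub hne hpw
    rw [Nat.le_zero, Set.ncard_eq_zero (Set.toFinite _)] at hc
    exact absurd hne (by rw [hc]; exact Set.not_nonempty_empty)
  | succ n ih =>
    intro 𝒮 hc hsub hne hpw
    by_cases h3 : ∃ M1 ∈ 𝒮, ∃ M2 ∈ 𝒮, ∃ M3 ∈ 𝒮, M1 ≠ M2 ∧ M1 ≠ M3 ∧ M2 ≠ M3
    · obtain ⟨M1, hM1, M2, hM2, M3, hM3, h12, h13, h23⟩ := h3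
      have key : ∀ M ∈ 𝒮, ∀ M' ∈ 𝒮, M ≠ M' →
          ∃ x, x ∈ ⋂₀ (𝒮 \ {M}) ∧ x ∈ M' := by
        intro M hM M' hM' hMM'
        have hlt : (𝒮 \ {M}).ncard ≤ n := by
          have := Set.ncard_diff_singleton_lt_of_mem hM (Set.toFinite _)
          omega
        obtain ⟨x, hx⟩ := ih (𝒮 \ {M}) hlt (fun Q hQ => hsub hQ.1)
          ⟨M', hM', hMM'.symm⟩ (fun Q hQ R hR => hpw Q hQ.1 R hR.1)
        exact ⟨x, hx, hx M' ⟨hM', hMM'.symm⟩⟩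
      obtain ⟨u, hu, -⟩ := key M1 hM1 M2 hM2 h12
      obtain ⟨v, hv, -⟩ := key M2 hM2 M1 hM1 h12.symm
      obtain ⟨w, hw, -⟩ := key M3 hM3 M1 hM1 h13.symm
      by_cases huM1 : u ∈ M1
      · refine ⟨u, fun M hM => ?_⟩
        rcases eq_or_ne M M1 with rfl | hne'
        · exact huM1
        · exact hu M ⟨hM, hne'⟩
      by_cases hvM2 : v ∈ M2
      · refine ⟨v, fun M hM => ?_⟩
        rcases eq_or_ne M M2 with rfl | hne'
        · exact hvM2
        · exact hv M ⟨hM, hne'⟩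
      by_cases hwM3 : w ∈ M3
      · refine ⟨w, fun M hM => ?_⟩
        rcases eq_or_ne M M3 with rfl | hne'
        · exact hwM3
        · exact hw M ⟨hM, hne'⟩
      exfalso
      have hu2 : u ∈ M2 := hu M2 ⟨hM2, h12.symm⟩
      have hu3 : u ∈ M3 := hu M3 ⟨hM3, h13.symm⟩
      have hv1 : v ∈ M1 := hv M1 ⟨hM1, h12⟩
      have hv3 : v ∈ M3 := hv M3 ⟨hM3, h23.symm⟩
      have hw1 : w ∈ M1 := hw M1 ⟨hM1, h13⟩
      have hw2 : w ∈ M2 := hw M2 ⟨hM2, h23⟩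
      have nuv : u ≠ v := fun h => huM1 (h ▸ hv1)
      have nuw : u ≠ w := fun h => huM1 (h ▸ hw1)
      have nvw : v ≠ w := fun h => hvM2 (h ▸ hw2)
      have cl1 := (hsub hM1).1
      have cl2 := (hsub hM2).1
      have cl3 := (hsub hM3).1
      have huv : (G.induce S).Adj u v := cl3 hu3 hv3 nuv
      have huw : (G.induce S).Adj u w := cl2 hu2 hw2 nuw
      have hvw : (G.induce S).Adj v w := cl1 hv1 hw1 nvw
      obtain ⟨a, haM1, hau, hnau⟩ := exists_nonadj (hsub hM1) huM1
      obtain ⟨b, hbM2, hbv, hnbv⟩ := exists_nonadj (hsub hM2) hvM2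
      obtain ⟨c, hcM3, hcw, hncw⟩ := exists_nonadj (hsub hM3) hwM3
      have nav : a ≠ v := fun h => hnau (h.symm ▸ huv.symm)
      have naw : a ≠ w := fun h => hnau (h.symm ▸ huw.symm)
      have nbu : b ≠ u := fun h => hnbv (h.symm ▸ huv)
      have nbw : b ≠ w := fun h => hnbv (h.symm ▸ hvw.symm)
      have ncu : c ≠ u := fun h => hncw (h.symm ▸ huw)
      have ncv : c ≠ v := fun h => hncw (h.symm ▸ hvw)
      have hav : (G.induce S).Adj a v := cl1 haM1 hv1 nav
      have haw : (G.induce S).Adj a w := cl1 haM1 hw1 naw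
      have hbu : (G.induce S).Adj b u := cl2 hbM2 hu2 nbu
      have hbw : (G.induce S).Adj b w := cl2 hbM2 hw2 nbw
      have hcu : (G.induce S).Adj c u := cl3 hcM3 hu3 ncu
      have hcv : (G.induce S).Adj c v := cl3 hcM3 hv3 ncv
      exact hnp (u : V) (v : V) (w : V) (a : V) (b : V) (c : V)
        huv huw hvw hav haw hnau (fun h => hau (Subtype.ext h))
        hbu hbw hnbv (fun h => hbv (Subtype.ext h))
        hcu hcv hncw (fun h => hcw (Subtype.ext h))
    · push_neg at h3
      obtain ⟨M1, hM1⟩ := hne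
      by_cases hall : ∀ M ∈ 𝒮, M = M1
      · obtain ⟨x, hx, -⟩ := hpw M1 hM1 M1 hM1
        exact ⟨x, fun M hM => (hall M hM) ▸ hx⟩
      · push_neg at hall
        obtain ⟨M2, hM2, hne2⟩ := hall
        obtain ⟨x, hx1, hx2⟩ := hpw M1 hM1 M2 hM2
        refine ⟨x, fun M hM => ?_⟩
        rcases eq_or_ne M M1 with rfl | hneq1
        · exact hx1
        rcases eq_or_ne M M2 with rfl | hneq2
        · exact hx2
        exact absurd (h3 M1 hM1 M2 hM2 M hM (fun h => hne2 h.symm) (fun h => hneq1 h.symm)).symm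
          hneq2

section Backward

variable {V : Type} [Fintype V] (G : SimpleGraph V) (f : Set V → V)

/-- The candidate split graph: clique `core G`, with `v ∉ core G` attached to
the representative `f Q` of each maximal clique `Q` containing `v`. -/
def splitH : SimpleGraph V :=
  SimpleGraph.fromRel (fun u v => (u ∈ core G ∧ v ∈ core G) ∨
    (v ∉ core G ∧ ∃ Q ∈ maxCliques G, f Q = u ∧ v ∈ Q))

variable {G f}

lemma splitH_adj {u v : V} : (splitH G f).Adj u v ↔ u ≠ v ∧
    ((u ∈ core G ∧ v ∈ core G) ∨ (v ∉ core G ∧ ∃ Q ∈ maxCliques G, f Q = u ∧ v ∈ Q) ∨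
      (u ∉ core G ∧ ∃ Q ∈ maxCliques G, f Q = v ∧ u ∈ Q)) := by
  rw [splitH, SimpleGraph.fromRel_adj]
  constructor
  · rintro ⟨hne, (h | h) | (h | h)⟩
    · exact ⟨hne, Or.inl h⟩
    · exact ⟨hne, Or.inr (Or.inl h)⟩
    · exact ⟨hne, Or.inl ⟨h.2, h.1⟩⟩
    · exact ⟨hne, Or.inr (Or.inr h)⟩
  · rintro ⟨hne, h | h | h⟩
    · exact ⟨hne, Or.inl (Or.inl h)⟩
    · exact ⟨hne, Or.inl (Or.inr h)⟩
    · exact ⟨hne, Or.inr (Or.inr h)⟩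

lemma core_adj {u v : V} (hu : u ∈ core G) (hv : v ∈ core G) (hne : u ≠ v) :
    (splitH G f).Adj u v := splitH_adj.2 ⟨hne, Or.inl ⟨hu, hv⟩⟩

variable (hf1 : ∀ Q ∈ maxCliques G, f Q ∈ core G) (hf2 : Set.InjOn f (maxCliques G))

include hf1 in
lemma not_adj_noncore {u v : V} (hu : u ∉ core G) (hv : v ∉ core G) :
    ¬ (splitH G f).Adj u v := by
  intro h
  rcases splitH_adj.1 h with ⟨hne, ⟨h1, -⟩ | ⟨-, Q, hQ, hfQ, -⟩ | ⟨-, Q, hQ, hfQ, -⟩⟩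
  · exact hu h1
  · exact hu (hfQ ▸ hf1 Q hQ)
  · exact hv (hfQ ▸ hf1 Q hQ)

include hf1 in
lemma adj_noncore {u v : V} (h : (splitH G f).Adj u v) (hv : v ∉ core G) :
    u ∈ core G ∧ ∃ Q ∈ maxCliques G, f Q = u ∧ v ∈ Q := by
  rcases splitH_adj.1 h with ⟨hne, ⟨-, h2⟩ | ⟨-, Q, hQ, hfQ, hvQ⟩ | ⟨-, Q, hQ, hfQ, hvQ⟩⟩
  · exact absurd h2 hv
  · exact ⟨hfQ ▸ hf1 Q hQ, Q, hQ, hfQ, hvQ⟩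
  · exact absurd (hfQ ▸ hf1 Q hQ) hv

include hf2 in
lemma helly_extend (hG : HCH G) (S : Set V) :
    ∀ n (T : Set V), T.ncard ≤ n → T.Nonempty →
      (∀ x ∈ T, ∀ y ∈ T, ∃ Q ∈ maxCliques G, f Q ∈ S ∧ x ∈ Q ∧ y ∈ Q) →
      ∃ Q ∈ maxCliques G, f Q ∈ S ∧ ∀ x ∈ T, x ∈ Q := by
  intro n
  induction n with
  | zero =>
    intro T hc hne hpair
    rw [Nat.le_zero, Set.ncard_eq_zero (Set.toFinite _)] at hc
    exact absurd hne (by rw [hc]; exact Set.not_nonempty_empty)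
  | succ n ih =>
    intro T hc hne hpair
    by_cases h3 : ∃ x1 ∈ T, ∃ x2 ∈ T, ∃ x3 ∈ T, x1 ≠ x2 ∧ x1 ≠ x3 ∧ x2 ≠ x3
    · obtain ⟨x1, hx1, x2, hx2, x3, hx3, n12, n13, n23⟩ := h3
      have key : ∀ x ∈ T, ∀ y ∈ T, x ≠ y →
          ∃ Q ∈ maxCliques G, f Q ∈ S ∧ (∀ z ∈ T \ {x}, z ∈ Q) := by
        intro x hx y hy hxy
        have hlt : (T \ {x}).ncard ≤ n := by
          have := Set.ncard_diff_singleton_lt_of_mem hx (Set.toFinite _)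
          omega
        obtain ⟨Q, hQ, hfQ, hall⟩ := ih (T \ {x}) hlt ⟨y, hy, hxy.symm⟩
          (fun z hz w hw => hpair z hz.1 w hw.1)
        exact ⟨Q, hQ, hfQ, hall⟩
      obtain ⟨A, hA, hfA, hallA⟩ := key x1 hx1 x2 hx2 n12
      obtain ⟨B, hB, hfB, hallB⟩ := key x2 hx2 x1 hx1 n12.symm
      obtain ⟨C, hC, hfC, hallC⟩ := key x3 hx3 x1 hx1 n13.symm
      by_cases h1A : x1 ∈ A
      · refine ⟨A, hA, hfA, fun x hx => ?_⟩
        rcases eq_or_ne x x1 with rfl | hne'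
        · exact h1A
        · exact hallA x ⟨hx, hne'⟩
      by_cases h2B : x2 ∈ B
      · refine ⟨B, hB, hfB, fun x hx => ?_⟩
        rcases eq_or_ne x x2 with rfl | hne'
        · exact h2B
        · exact hallB x ⟨hx, hne'⟩
      by_cases h3C : x3 ∈ C
      · refine ⟨C, hC, hfC, fun x hx => ?_⟩
        rcases eq_or_ne x x3 with rfl | hne'
        · exact h3C
        · exact hallC x ⟨hx, hne'⟩
      exfalso
      -- the three points are pairwise adjacent in G
      have hadj : ∀ x ∈ T, ∀ y ∈ T, x ≠ y → G.Adj x y := by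
        intro x hx y hy hxy
        obtain ⟨Q, hQ, -, hxQ, hyQ⟩ := hpair x hx y hy
        exact hQ.1 hxQ hyQ hxy
      have h12 : G.Adj x1 x2 := hadj x1 hx1 x2 hx2 n12
      have h13 : G.Adj x1 x3 := hadj x1 hx1 x3 hx3 n13
      have h23 : G.Adj x2 x3 := hadj x2 hx2 x3 hx3 n23
      have h2A : x2 ∈ A := hallA x2 ⟨hx2, n12.symm⟩
      have h3A : x3 ∈ A := hallA x3 ⟨hx3, n13.symm⟩
      have h1B : x1 ∈ B := hallB x1 ⟨hx1, n12⟩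
      have h3B : x3 ∈ B := hallB x3 ⟨hx3, n23.symm⟩
      have h1C : x1 ∈ C := hallC x1 ⟨hx1, n13⟩
      have h2C : x2 ∈ C := hallC x2 ⟨hx2, n23⟩
      obtain ⟨a, haA, hane, hna1⟩ := exists_nonadj hA h1A
      obtain ⟨b, hbB, hbne, hnb2⟩ := exists_nonadj hB h2B
      obtain ⟨c, hcC, hcne, hnc3⟩ := exists_nonadj hC h3C
      have na2 : a ≠ x2 := fun h => hna1 (h.symm ▸ h12.symm)
      have na3 : a ≠ x3 := fun h => hna1 (h.symm ▸ h13.symm)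
      have nb1 : b ≠ x1 := fun h => hnb2 (h.symm ▸ h12)
      have nb3 : b ≠ x3 := fun h => hnb2 (h.symm ▸ h23.symm)
      have nc1 : c ≠ x1 := fun h => hnc3 (h.symm ▸ h13)
      have nc2 : c ≠ x2 := fun h => hnc3 (h.symm ▸ h23)
      have ha2 : G.Adj a x2 := hA.1 haA h2A na2
      have ha3 : G.Adj a x3 := hA.1 haA h3A na3
      have hb1 : G.Adj b x1 := hB.1 hbB h1B nb1
      have hb3 : G.Adj b x3 := hB.1 hbB h3B nb3
      have hc1 : G.Adj c x1 := hC.1 hcC h1C nc1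
      have hc2 : G.Adj c x2 := hC.1 hcC h2C nc2
      exact hajos_pattern G x1 x2 x3 a b c h12 h13 h23 ha2 ha3 hna1 hane
        hb1 hb3 hnb2 hbne hc1 hc2 hnc3 hcne hG
    · push_neg at h3
      obtain ⟨x1, hx1⟩ := hne
      by_cases hall : ∀ x ∈ T, x = x1
      · obtain ⟨Q, hQ, hfQ, hx1Q, -⟩ := hpair x1 hx1 x1 hx1
        exact ⟨Q, hQ, hfQ, fun x hx => (hall x hx) ▸ hx1Q⟩
      · push_neg at hall
        obtain ⟨x2, hx2, hne2⟩ := hall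
        obtain ⟨Q, hQ, hfQ, hx1Q, hx2Q⟩ := hpair x1 hx1 x2 hx2
        refine ⟨Q, hQ, hfQ, fun x hx => ?_⟩
        rcases eq_or_ne x x1 with rfl | hneq1
        · exact hx1Q
        rcases eq_or_ne x x2 with rfl | hneq2
        · exact hx2Q
        exact absurd (h3 x1 hx1 x2 hx2 x hx (Ne.symm hne2) (Ne.symm hneq1)).symm hneq2

include hf1 hf2 in
lemma hch_splitH (hG : HCH G) : HCH (splitH G f) := by
  intro S 𝒮 hsub hne hpw
  classical
  have tipU : ∀ M ∈ 𝒮, ∀ x ∈ M, ∀ y ∈ M, (x : V) ∉ core G → (y : V) ∉ core G → x = y := by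
    intro M hM x hx y hy hxc hyc
    by_contra hne'
    exact not_adj_noncore hf1 hxc hyc ((hsub hM).1 hx hy hne')
  by_cases htriv : ∀ M ∈ 𝒮, ∀ M' ∈ 𝒮, M = M'
  · obtain ⟨M0, hM0⟩ := hne
    obtain ⟨x, hx, -⟩ := hpw M0 hM0 M0 hM0
    exact ⟨x, fun M hM => (htriv M hM M0 hM0) ▸ hx⟩
  push_neg at htriv
  obtain ⟨M1, hM1, M2, hM2, hM12⟩ := htriv
  by_contra hcon
  set T : Set ↥S := {x | (∃ M ∈ 𝒮, x ∈ M) ∧ (x : V) ∉ core G} with hT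
  have hTpair : ∀ x ∈ T, ∀ y ∈ T, ∃ Q ∈ maxCliques G, f Q ∈ S ∧ (x : V) ∈ Q ∧ (y : V) ∈ Q := by
    intro x hx y hy
    obtain ⟨⟨Mx, hMx, hxMx⟩, hxc⟩ := hx
    obtain ⟨⟨My, hMy, hyMy⟩, hyc⟩ := hy
    rcases eq_or_ne x y with rfl | hxy
    · obtain ⟨M'', hM'', hxnot⟩ : ∃ M ∈ 𝒮, x ∉ M := by
        by_contra hall
        push_neg at hall
        exact hcon ⟨x, fun M hM => hall M hM⟩
      obtain ⟨z, hz1, hz2⟩ := hpw Mx hMx M'' hM''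
      have hzx : z ≠ x := fun h => hxnot (h ▸ hz2)
      have hadj : (splitH G f).Adj (z : V) (x : V) := (hsub hMx).1 hz1 hxMx hzx
      obtain ⟨-, Q, hQ, hfQ, hxQ⟩ := adj_noncore hf1 hadj hxc
      exact ⟨Q, hQ, hfQ ▸ z.2, hxQ, hxQ⟩
    · obtain ⟨z, hz1, hz2⟩ := hpw Mx hMx My hMy
      have hzx : z ≠ x := by
        intro h
        exact hxy (tipU My hMy x (h ▸ hz2) y hyMy hxc hyc)
      have hzy : z ≠ y := by
        intro h
        exact hxy (tipU Mx hMx x hxMx y (h ▸ hz1) hxc hyc)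
      have hadjx : (splitH G f).Adj (z : V) (x : V) := (hsub hMx).1 hz1 hxMx hzx
      have hadjy : (splitH G f).Adj (z : V) (y : V) := (hsub hMy).1 hz2 hyMy hzy
      obtain ⟨-, Q, hQ, hfQ, hxQ⟩ := adj_noncore hf1 hadjx hxc
      obtain ⟨-, Q', hQ', hfQ', hyQ'⟩ := adj_noncore hf1 hadjy hyc
      have hQQ' : Q = Q' := hf2 hQ hQ' (hfQ.trans hfQ'.symm)
      exact ⟨Q, hQ, hfQ ▸ z.2, hxQ, hQQ' ▸ hyQ'⟩
  by_cases hTne : T.Nonempty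
  · -- get a maximal clique of G containing all "tips", with representative in S
    have hTpair' : ∀ x ∈ Subtype.val '' T, ∀ y ∈ Subtype.val '' T,
        ∃ Q ∈ maxCliques G, f Q ∈ S ∧ x ∈ Q ∧ y ∈ Q := by
      rintro x ⟨x', hx', rfl⟩ y ⟨y', hy', rfl⟩
      exact hTpair x' hx' y' hy'
    obtain ⟨Q, hQ, hfS, hall⟩ := helly_extend hf2 hG S (Subtype.val '' T).ncard
      (Subtype.val '' T) le_rfl (hTne.image _) hTpair'
    refine hcon ⟨⟨f Q, hfS⟩, fun M hM => ?_⟩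
    have hMmax := hsub hM
    have hclq : (SimpleGraph.induce S (splitH G f)).IsClique (insert ⟨f Q, hfS⟩ M) := by
      intro x hx y hy hxy
      have hadj : ∀ m : ↥S, m ∈ M → m ≠ (⟨f Q, hfS⟩ : ↥S) →
          (SimpleGraph.induce S (splitH G f)).Adj m ⟨f Q, hfS⟩ := by
        intro m hm hmne
        have hmne' : (m : V) ≠ f Q := fun h => hmne (Subtype.ext h)
        by_cases hmc : (m : V) ∈ core G
        · exact core_adj hmc (hf1 Q hQ) hmne'
        · have hmT : m ∈ T := ⟨⟨M, hM, hm⟩, hmc⟩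
          have hmQ : (m : V) ∈ Q := hall (m : V) ⟨m, hmT, rfl⟩
          exact (splitH_adj.2 ⟨hmne', Or.inr (Or.inr ⟨hmc, Q, hQ, rfl, hmQ⟩)⟩ :
            (splitH G f).Adj (m : V) (f Q))
      rcases hx with rfl | hx
      · rcases hy with rfl | hy
        · exact absurd rfl hxy
        · exact (hadj y hy (Ne.symm hxy)).symm
      · rcases hy with rfl | hy
        · exact hadj x hx hxy
        · exact hMmax.1 hx hy hxy
    have heq := hMmax.2 _ hclq (Set.subset_insert _ _)
    rw [heq]
    exact Set.mem_insert _ _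
  · exfalso
    have hallcore : ∀ M ∈ 𝒮, ∀ x ∈ M, (x : V) ∈ core G := by
      intro M hM x hx
      by_contra hc
      exact hTne ⟨x, ⟨M, hM, hx⟩, hc⟩
    have hclq : (SimpleGraph.induce S (splitH G f)).IsClique (M1 ∪ M2) := by
      intro x hx y hy hxy
      have hxc : (x : V) ∈ core G := by
        rcases hx with hx | hx
        exacts [hallcore M1 hM1 x hx, hallcore M2 hM2 x hx]
      have hyc : (y : V) ∈ core G := by
        rcases hy with hy | hy
        exacts [hallcore M1 hM1 y hy, hallcore M2 hM2 y hy]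
      exact core_adj hxc hyc (fun h => hxy (Subtype.ext h))
    have h1 := (hsub hM1).2 _ hclq Set.subset_union_left
    have h2 := (hsub hM2).2 _ hclq Set.subset_union_right
    exact hM12 (h1.trans h2.symm)

end Backward

lemma backward_dir {V : Type} [Fintype V] (G : SimpleGraph V) (hG : HCH G)
    (hineq : cliqueIneq G) :
    ∃ H : SimpleGraph V, IsSplit H ∧ HCH H ∧ H.Connected ∧ Gsq H = G := by
  classical
  obtain ⟨Q0, hQ0, -⟩ := exists_max_clique G (G.isClique_empty)
  have hCne : (maxCliques G).Nonempty := ⟨Q0, hQ0⟩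
  have hcore_ne : (core G).Nonempty := by
    rw [← Set.ncard_pos (Set.toFinite _)]
    have h1 : 0 < (maxCliques G).ncard := (Set.ncard_pos (Set.toFinite _)).2 hCne
    exact lt_of_lt_of_le h1 hineq
  -- build the injection from maximal cliques into the core
  haveI : Fintype ↥(maxCliques G) := Fintype.ofFinite _
  haveI : Fintype ↥(core G) := Fintype.ofFinite _
  have hcard : Fintype.card ↥(maxCliques G) ≤ Fintype.card ↥(core G) := by
    rw [← Nat.card_eq_fintype_card, ← Nat.card_eq_fintype_card,
      Nat.card_coe_set_eq, Nat.card_coe_set_eq]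
    exact hineq
  obtain ⟨e⟩ := Function.Embedding.nonempty_of_card_le hcard
  set f : Set V → V := fun Q => if h : Q ∈ maxCliques G then (e ⟨Q, h⟩ : V)
    else hcore_ne.choose with hfdef
  have hf1 : ∀ Q ∈ maxCliques G, f Q ∈ core G := by
    intro Q hQ
    simp only [hfdef, dif_pos hQ]
    exact (e ⟨Q, hQ⟩).2
  have hf2 : Set.InjOn f (maxCliques G) := by
    intro Q hQ Q' hQ' heq
    simp only [hfdef, dif_pos hQ, dif_pos hQ'] at heq
    have := e.injective (Subtype.ext heq)
    exact congrArg Subtype.val this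
  set H := splitH G f with hH
  -- basic adjacency facts about G itself
  have gadj_core : ∀ u v : V, u ∈ core G → u ≠ v → G.Adj u v := by
    intro u v hu hne
    obtain ⟨Qv, hQv, hvQv⟩ := mem_max_clique G v
    exact hQv.1 (core_subset_max hQv hu) hvQv hne
  refine ⟨H, ⟨core G, (core G)ᶜ, ?_, ?_, ?_, ?_⟩, hch_splitH hf1 hf2 hG, ?_, ?_⟩
  · exact Set.union_compl_self _
  · exact disjoint_compl_right
  · intro x hx y hy hne
    exact core_adj hx hy hne
  · intro a ha b hb
    exact not_adj_noncore hf1 ha hb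
  · -- connectivity
    obtain ⟨c0, hc0⟩ := hcore_ne
    haveI : Nonempty V := ⟨c0⟩
    have hreach : ∀ v : V, H.Reachable v c0 := by
      intro v
      by_cases hv : v ∈ core G
      · rcases eq_or_ne v c0 with rfl | hne
        · exact SimpleGraph.Reachable.refl _
        · exact (core_adj hv hc0 hne).reachable
      · obtain ⟨Q, hQ, hvQ⟩ := mem_max_clique G v
        have hfQ : f Q ∈ core G := hf1 Q hQ
        have hne : v ≠ f Q := fun h => hv (h ▸ hfQ)
        have hadj : H.Adj v (f Q) :=
          splitH_adj.2 ⟨hne, Or.inr (Or.inr ⟨hv, Q, hQ, rfl, hvQ⟩)⟩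
        rcases eq_or_ne (f Q) c0 with heq | hne'
        · exact (heq ▸ hadj).reachable
        · exact hadj.reachable.trans (core_adj hfQ hc0 hne').reachable
    exact ⟨fun u v => (hreach u).trans (hreach v).symm⟩
  · -- Gsq H = G
    ext u v
    show (u ≠ v ∧ (H.Adj u v ∨ ∃ w, H.Adj u w ∧ H.Adj w v)) ↔ G.Adj u v
    constructor
    · rintro ⟨hne, h⟩
      by_cases hu : u ∈ core G
      · exact gadj_core u v hu hne
      by_cases hv : v ∈ core G
      · exact (gadj_core v u hv hne.symm).symm
      rcases h with h | ⟨w, h1, h2⟩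
      · exact absurd h (not_adj_noncore hf1 hu hv)
      · obtain ⟨-, Q, hQ, hfQ, huQ⟩ := adj_noncore hf1 h1.symm hu
        obtain ⟨-, Q', hQ', hfQ', hvQ'⟩ := adj_noncore hf1 h2 hv
        have hQQ' : Q = Q' := hf2 hQ hQ' (hfQ.trans hfQ'.symm)
        exact hQ.1 huQ (hQQ' ▸ hvQ') hne
    · intro h
      refine ⟨h.ne, ?_⟩
      obtain ⟨Q, hQ, huQ, hvQ⟩ := adj_common_clique h
      have hfQ : f Q ∈ core G := hf1 Q hQ
      by_cases hu : u ∈ core G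
      · by_cases hv : v ∈ core G
        · exact Or.inl (core_adj hu hv h.ne)
        · have hadj2 : H.Adj (f Q) v :=
            splitH_adj.2 ⟨fun he => hv (he ▸ hfQ), Or.inr (Or.inl ⟨hv, Q, hQ, rfl, hvQ⟩)⟩
          rcases eq_or_ne (f Q) u with heq | hne'
          · exact Or.inl (heq ▸ hadj2)
          · exact Or.inr ⟨f Q, core_adj hu hfQ (Ne.symm hne'), hadj2⟩
      · have hadj1 : H.Adj u (f Q) :=
          splitH_adj.2 ⟨fun he => hu (he ▸ hfQ), Or.inr (Or.inr ⟨hu, Q, hQ, rfl, huQ⟩)⟩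
        by_cases hv : v ∈ core G
        · rcases eq_or_ne (f Q) v with heq | hne'
          · exact Or.inl (heq ▸ hadj1)
          · exact Or.inr ⟨f Q, hadj1, core_adj hfQ hv hne'⟩
        · have hadj2 : H.Adj (f Q) v :=
            splitH_adj.2 ⟨fun he => hv (he ▸ hfQ), Or.inr (Or.inl ⟨hv, Q, hQ, rfl, hvQ⟩)⟩
          exact Or.inr ⟨f Q, hadj1, hadj2⟩

lemma forward_dir {V : Type} [Fintype V] (H : SimpleGraph V) (hsplit : IsSplit H)
    (hHCH : HCH H) (hconn : H.Connected) : HCH (Gsq H) ∧ cliqueIneq (Gsq H) := by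
  classical
  obtain ⟨C, I, hunion, hdisj, hclique, hindep⟩ := hsplit
  have hCI : ∀ v : V, v ∉ C → v ∈ I := by
    intro v hv
    have : v ∈ C ∪ I := hunion ▸ Set.mem_univ v
    exact this.resolve_left hv
  by_cases hiso : ∃ v, ∀ u, ¬ H.Adj v u
  · -- isolated vertex: V is a subsingleton
    obtain ⟨v, hv⟩ := hiso
    have all_eq : ∀ u, u = v := by
      intro u
      obtain ⟨w⟩ := (hconn.preconnected v u)
      cases w with
      | nil => rfl
      | cons h _ => exact absurd h (hv _)
    haveI hsing : Subsingleton V := ⟨fun a b => (all_eq a).trans (all_eq b).symm⟩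
    have hmax : maxCliques (Gsq H) = {Set.univ} := by
      ext Q
      have huc : (Gsq H).IsClique (Set.univ : Set V) := by
        intro x _ y _ hxy
        exact absurd (Subsingleton.elim x y) hxy
      constructor
      · intro hQ
        exact hQ.2 Set.univ huc (Set.subset_univ _)
      · rintro rfl
        exact ⟨huc, fun R _ hsub => (Set.univ_subset_iff.mp hsub).symm⟩
    constructor
    · intro S 𝒮 hsub hne hpw
      obtain ⟨M0, hM0⟩ := hne
      obtain ⟨x, hx, -⟩ := hpw M0 hM0 M0 hM0
      refine ⟨x, fun M hM => ?_⟩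
      obtain ⟨z, hz1, -⟩ := hpw M hM M0 hM0
      exact (Subsingleton.elim x z) ▸ hz1
    · rw [cliqueIneq, core, hmax]
      rw [Set.ncard_singleton, Set.sInter_singleton, Set.ncard_univ]
      haveI : Nonempty V := hconn.nonempty
      exact Nat.one_le_iff_ne_zero.mpr (Nat.card_ne_zero.mpr ⟨inferInstance, inferInstance⟩)
  · push_neg at hiso
    -- main case : every vertex has a neighbour
    have M1 : ∀ v ∉ C, ∃ c ∈ C, H.Adj v c := by
      intro v hv
      obtain ⟨u, hu⟩ := hiso v
      by_cases huC : u ∈ C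
      · exact ⟨u, huC, hu⟩
      · exact absurd hu (hindep v (hCI v hv) u (hCI u huC))
    have M2 : ∀ c ∈ C, ∀ v, c ≠ v → (Gsq H).Adj c v := by
      intro c hc v hne
      refine ⟨hne, ?_⟩
      by_cases hvC : v ∈ C
      · exact Or.inl (hclique hc hvC hne)
      · obtain ⟨c', hc', hadj⟩ := M1 v hvC
        rcases eq_or_ne c' c with rfl | hne'
        · exact Or.inl hadj.symm
        · exact Or.inr ⟨c', hclique hc hc' (Ne.symm hne'), hadj.symm⟩
    have M3 : ∀ M ∈ maxCliques (Gsq H), C ⊆ M := by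
      intro M hM c hc
      have hclq : (Gsq H).IsClique (insert c M) := by
        intro x hx y hy hxy
        rcases hx with rfl | hx
        · rcases hy with rfl | hy
          · exact absurd rfl hxy
          · exact M2 x hc y hxy
        · rcases hy with rfl | hy
          · exact (M2 y hc x (Ne.symm hxy)).symm
          · exact hM.1 hx hy hxy
      have heq := hM.2 _ hclq (Set.subset_insert _ _)
      rw [heq]
      exact Set.mem_insert _ _
    have hCcore : C ⊆ core (Gsq H) := fun c hc Q hQ => M3 Q hQ hc
    have M6 : ∀ d ∉ C, {x | x = d ∨ H.Adj d x} ∈ maxCliques H := by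
      intro d hd
      constructor
      · intro x hx y hy hxy
        rcases hx with rfl | hx
        · rcases hy with rfl | hy
          · exact absurd rfl hxy
          · exact hy
        · rcases hy with rfl | hy
          · exact hx.symm
          · have hxC : x ∈ C := by
              by_contra hxC
              exact hindep d (hCI d hd) x (hCI x hxC) hx
            have hyC : y ∈ C := by
              by_contra hyC
              exact hindep d (hCI d hd) y (hCI y hyC) hy
            exact hclique hxC hyC hxy
      · intro R hR hsub
        refine Set.Subset.antisymm hsub fun x hx => ?_
        rcases eq_or_ne x d with rfl | hne
        · exact Or.inl rfl
        · exact Or.inr ((hR hx (hsub (Or.inl rfl)) hne).symm)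
    -- common-neighbour extraction for triples of independent vertices
    have common3 : ∀ p q r : V, p ∉ C → q ∉ C → r ∉ C →
        (Gsq H).Adj p q → (Gsq H).Adj p r → (Gsq H).Adj q r →
        ∃ x ∈ C, H.Adj p x ∧ H.Adj q x ∧ H.Adj r x := by
      intro p q r hp hq hr hpq hpr hqr
      have npair : ∀ s t : V, s ∉ C → t ∉ C → (Gsq H).Adj s t →
          ∃ w, H.Adj s w ∧ H.Adj w t := by
        intro s t hs ht hadj
        obtain ⟨hne, hd | hw⟩ := hadj
        · exact absurd hd (hindep s (hCI s hs) t (hCI t ht))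
        · exact hw
      set Np : Set V := {x | x = p ∨ H.Adj p x} with hNp
      set Nq : Set V := {x | x = q ∨ H.Adj q x} with hNq
      set Nr : Set V := {x | x = r ∨ H.Adj r x} with hNr
      have hsub : ({Np, Nq, Nr} : Set (Set V)) ⊆ maxCliques H := by
        intro X hX
        simp only [Set.mem_insert_iff, Set.mem_singleton_iff] at hX
        rcases hX with rfl | rfl | rfl
        exacts [M6 p hp, M6 q hq, M6 r hr]
      have hwit : ∀ s t : V, s ∉ C → t ∉ C → (Gsq H).Adj s t →
          (({x | x = s ∨ H.Adj s x} : Set V) ∩ {x | x = t ∨ H.Adj t x}).Nonempty := by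
        intro s t hs ht hadj
        obtain ⟨w, hw1, hw2⟩ := npair s t hs ht hadj
        exact ⟨w, Or.inr hw1, Or.inr hw2.symm⟩
      have hpw : ∀ Q ∈ ({Np, Nq, Nr} : Set (Set V)), ∀ R ∈ ({Np, Nq, Nr} : Set (Set V)),
          (Q ∩ R).Nonempty := by
        intro Q hQ R hR
        simp only [Set.mem_insert_iff, Set.mem_singleton_iff] at hQ hR
        rcases hQ with rfl | rfl | rfl <;> rcases hR with rfl | rfl | rfl
        · exact ⟨p, Or.inl rfl, Or.inl rfl⟩
        · exact hwit p q hp hq hpq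
        · exact hwit p r hp hr hpr
        · exact (Set.inter_comm _ _) ▸ hwit p q hp hq hpq
        · exact ⟨q, Or.inl rfl, Or.inl rfl⟩
        · exact hwit q r hq hr hqr
        · exact (Set.inter_comm _ _) ▸ hwit p r hp hr hpr
        · exact (Set.inter_comm _ _) ▸ hwit q r hq hr hqr
        · exact ⟨r, Or.inl rfl, Or.inl rfl⟩
      obtain ⟨x, hx⟩ := cliqueHelly_of_HCH H hHCH hsub ⟨Np, by simp⟩ hpw
      have hxp : x ∈ Np := hx Np (by simp)
      have hxq : x ∈ Nq := hx Nq (by simp)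
      have hxr : x ∈ Nr := hx Nr (by simp)
      have hadjp : H.Adj p x := by
        rcases hxp with rfl | h
        · rcases hxq with rfl | h
          · exact absurd rfl hpq.1
          · exact absurd h (hindep q (hCI q hq) x (hCI x hp))
        · exact h
      have hadjq : H.Adj q x := by
        rcases hxq with rfl | h
        · rcases hxp with heq | h
          · exact absurd heq.symm hpq.1
          · exact absurd h (hindep p (hCI p hp) x (hCI x hq))
        · exact h
      have hadjr : H.Adj r x := by
        rcases hxr with rfl | h
        · rcases hxp with heq | h
          · exact absurd heq.symm hpr.1
          · exact absurd h (hindep p (hCI p hp) x (hCI x hr))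
        · exact h
      have hxC : x ∈ C := by
        by_contra hxC
        exact hindep p (hCI p hp) x (hCI x hxC) hadjp
      exact ⟨x, hxC, hadjp, hadjq, hadjr⟩
    constructor
    · -- HCH (Gsq H)
      apply hch_of_no_pattern
      intro v1 v2 v3 a b c h12 h13 h23 ha2 ha3 ha1 hane hb1 hb3 hb2 hbne hc1 hc2 hc3 hcne
      -- all six vertices are independent in H
      have haC : a ∉ C := fun h => ha1 (M2 a h v1 hane)
      have hv1C : v1 ∉ C := fun h => ha1 (M2 v1 h a (Ne.symm hane)).symm
      have hbC : b ∉ C := fun h => hb2 (M2 b h v2 hbne)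
      have hv2C : v2 ∉ C := fun h => hb2 (M2 v2 h b (Ne.symm hbne)).symm
      have hcC : c ∉ C := fun h => hc3 (M2 c h v3 hcne)
      have hv3C : v3 ∉ C := fun h => hc3 (M2 v3 h c (Ne.symm hcne)).symm
      obtain ⟨y, hyC, hya, hyv2, hyv3⟩ := common3 a v2 v3 haC hv2C hv3C ha2 ha3 h23
      obtain ⟨z, hzC, hzb, hzv1, hzv3⟩ := common3 b v1 v3 hbC hv1C hv3C hb1 hb3 h13
      obtain ⟨w, hwC, hwc, hwv1, hwv2⟩ := common3 c v1 v2 hcC hv1C hv2C hc1 hc2 h12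
      have hny1 : ¬ H.Adj v1 y := by
        intro h
        exact ha1 ⟨hane, Or.inr ⟨y, hya, h.symm⟩⟩
      have hnz2 : ¬ H.Adj v2 z := by
        intro h
        exact hb2 ⟨hbne, Or.inr ⟨z, hzb, h.symm⟩⟩
      have hnw3 : ¬ H.Adj v3 w := by
        intro h
        exact hc3 ⟨hcne, Or.inr ⟨w, hwc, h.symm⟩⟩
      have nyz : y ≠ z := fun h => hny1 (h ▸ hzv1)
      have nyw : y ≠ w := fun h => hny1 (h ▸ hwv1)
      have nzw : z ≠ w := fun h => hnz2 (h ▸ hwv2)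
      have hyz : H.Adj y z := hclique hyC hzC nyz
      have hyw : H.Adj y w := hclique hyC hwC nyw
      have hzw : H.Adj z w := hclique hzC hwC nzw
      have hv1y : v1 ≠ y := fun h => (Set.disjoint_left.mp hdisj (h ▸ hyC)) (hCI v1 hv1C)
      have hv2z : v2 ≠ z := fun h => (Set.disjoint_left.mp hdisj (h ▸ hzC)) (hCI v2 hv2C)
      have hv3w : v3 ≠ w := fun h => (Set.disjoint_left.mp hdisj (h ▸ hwC)) (hCI v3 hv3C)
      exact hajos_pattern H y z w v1 v2 v3 hyz hyw hzw hzv1 hwv1 hny1 hv1y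
        hyv2 hwv2 hnz2 hv2z hyv3 hzv3 hnw3 hv3w hHCH
    · -- the cardinality inequality
      have hCne : ∃ c, c ∈ C := by
        haveI : Nonempty V := hconn.nonempty
        obtain ⟨v⟩ := ‹Nonempty V›
        by_cases hv : v ∈ C
        · exact ⟨v, hv⟩
        · obtain ⟨c, hc, -⟩ := M1 v hv
          exact ⟨c, hc⟩
      have M7 : ∀ M ∈ maxCliques (Gsq H), ∃ x, x ∈ C ∧ ∀ d ∈ M, d ∉ C → H.Adj d x := by
        intro M hM
        by_cases hD : ∃ d ∈ M, d ∉ C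
        · obtain ⟨d0, hd0M, hd0C⟩ := hD
          by_cases hD2 : ∃ d' ∈ M, d' ∉ C ∧ d' ≠ d0
          · obtain ⟨d1, hd1M, hd1C, hd1ne⟩ := hD2
            set D : Set V := {d ∈ M | d ∉ C} with hDdef
            set F : Set (Set V) := (fun d => {x | x = d ∨ H.Adj d x}) '' D with hF
            have hsub : F ⊆ maxCliques H := by
              rintro X ⟨d, hd, rfl⟩
              exact M6 d hd.2
            have hpw : ∀ Q ∈ F, ∀ R ∈ F, (Q ∩ R).Nonempty := by
              rintro Q ⟨d, hd, rfl⟩ R ⟨d', hd', rfl⟩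
              rcases eq_or_ne d d' with rfl | hne
              · exact ⟨d, Or.inl rfl, Or.inl rfl⟩
              · have hadj : (Gsq H).Adj d d' := hM.1 hd.1 hd'.1 hne
                obtain ⟨-, hdd | ⟨w, hw1, hw2⟩⟩ := hadj
                · exact absurd hdd (hindep d (hCI d hd.2) d' (hCI d' hd'.2))
                · exact ⟨w, Or.inr hw1, Or.inr hw2.symm⟩
            obtain ⟨x, hx⟩ := cliqueHelly_of_HCH H hHCH hsub
              ⟨_, ⟨d0, ⟨hd0M, hd0C⟩, rfl⟩⟩ hpw
            have hadjall : ∀ d ∈ M, d ∉ C → H.Adj d x := by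
              intro d hdM hdC
              have hxd : x ∈ {x | x = d ∨ H.Adj d x} := hx _ ⟨d, ⟨hdM, hdC⟩, rfl⟩
              rcases hxd with rfl | h
              · exfalso
                rcases eq_or_ne x d0 with rfl | hne0
                · have hxd1 : x ∈ {y | y = d1 ∨ H.Adj d1 y} := hx _ ⟨d1, ⟨hd1M, hd1C⟩, rfl⟩
                  rcases hxd1 with heq | h1
                  · exact hd1ne heq.symm
                  · exact hindep d1 (hCI d1 hd1C) x (hCI x hdC) h1
                · have hxd0 : x ∈ {y | y = d0 ∨ H.Adj d0 y} := hx _ ⟨d0, ⟨hd0M, hd0C⟩, rfl⟩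
                  rcases hxd0 with heq | h0
                  · exact hne0 heq
                  · exact hindep d0 (hCI d0 hd0C) x (hCI x hdC) h0
              · exact h
            have hxC : x ∈ C := by
              by_contra hxC
              exact hindep d0 (hCI d0 hd0C) x (hCI x hxC) (hadjall d0 hd0M hd0C)
            exact ⟨x, hxC, hadjall⟩
          · push_neg at hD2
            obtain ⟨x, hxC, hadj⟩ := M1 d0 hd0C
            refine ⟨x, hxC, fun d hdM hdC => ?_⟩
            rcases eq_or_ne d d0 with rfl | hne
            · exact hadj
            · exact absurd (hD2 d hdM hdC) hne
        · push_neg at hD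
          obtain ⟨x, hxC⟩ := hCne
          exact ⟨x, hxC, fun d hdM hdC => absurd (hD d hdM) (fun h => hdC h)⟩
      haveI : Nonempty V := hconn.nonempty
      choose! g hg1 hg2 using M7
      have hinj : Set.InjOn g (maxCliques (Gsq H)) := by
        intro M hM M' hM' heq
        have hclq : (Gsq H).IsClique (M ∪ M') := by
          have cross : ∀ x ∈ M, ∀ y ∈ M', x ≠ y → (Gsq H).Adj x y := by
            intro x hx y hy hxy
            by_cases hxC : x ∈ C
            · exact M2 x hxC y hxy
            by_cases hyC : y ∈ C
            · exact (M2 y hyC x (Ne.symm hxy)).symm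
            · have h1 : H.Adj x (g M) := hg2 M hM x hx hxC
              have h2 : H.Adj y (g M') := hg2 M' hM' y hy hyC
              rw [← heq] at h2
              exact ⟨hxy, Or.inr ⟨g M, h1, h2.symm⟩⟩
          intro x hx y hy hxy
          rcases hx with hx | hx <;> rcases hy with hy | hy
          · exact hM.1 hx hy hxy
          · exact cross x hx y hy hxy
          · exact (cross y hy x hx (Ne.symm hxy)).symm
          · exact hM'.1 hx hy hxy
        have e1 := hM.2 _ hclq Set.subset_union_left
        have e2 := hM'.2 _ hclq Set.subset_union_right
        exact e1.trans e2.symm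
      rw [cliqueIneq]
      refine Set.ncard_le_ncard_of_injOn g (fun M hM => hCcore (hg1 M hM)) hinj
        (Set.toFinite _)

end Aux

theorem square_of_HCH_split_iff {V : Type} [Fintype V] (G : SimpleGraph V) :
    (∃ H : SimpleGraph V, IsSplit H ∧ HCH H ∧ H.Connected ∧ Gsq H = G) ↔
      HCH G ∧ cliqueIneq G := by
  constructor
  · rintro ⟨H, hs, hh, hc, rfl⟩
    exact forward_dir H hs hh hc
  · rintro ⟨hG, hineq⟩
    exact backward_dir G hG hineq
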